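/- arXiv:2512.12862 — 2 statements merged into one kernel-verified Lean document; each statement's English description precedes it below -/
import Mathlib

section
/- Let X be a nonempty compact metric space with metric d and let f : X → X be an arbitrary function (no continuity is assumed). Then the set of strongly chain-recurrent points of (X,f) is nonempty: there exists x ∈ X such that for every ε > 0 there is a strong (ε,d)-chain from x back to x. -/
/-!
The strong chain relation `R` is transitive, satisfies `R x (f x)`, and has closed sections
`{y | R x y}`: a chain ending near `y` is turned into one ending at `y` by moving its last point,
at a cost equal to the distance moved. For any such relation on a compact space, Zorn's lemma and
Cantor's intersection theorem give a section `{y | R x₀ y}` that is minimal among all sections;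
if `R x₀ y`, then the section of `y` lies inside it and hence equals it, so `R y y`.
-/

/-- `c 0, c 1, …, c n` is a strong `(ε,d)`-chain for `f` from `x` to `y`:
`n ≥ 1`, `c 0 = x`, `c n = y` and `∑_{i<n} d(f(c i), c (i+1)) < ε`. -/
def IsStrongChain {X : Type*} [MetricSpace X] (f : X → X) (ε : ℝ) (x y : X)
    (n : ℕ) (c : ℕ → X) : Prop :=
  1 ≤ n ∧ c 0 = x ∧ c n = y ∧
    ∑ i ∈ Finset.range n, dist (f (c i)) (c (i + 1)) < ε

open Function

theorem exists_rel_self_of_isClosed_setOf_rel {X : Type*} [TopologicalSpace X] [CompactSpace X]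
    [Nonempty X] {R : X → X → Prop} (htrans : ∀ {x y z}, R x y → R y z → R x z)
    (hserial : ∀ x, ∃ y, R x y) (hclosed : ∀ x, IsClosed {y | R x y}) : ∃ x, R x x := by
  set S : X → Set X := fun x => {y | R x y}
  have hS_mono : ∀ {x y}, R x y → S y ⊆ S x := fun hxy _ hyz => htrans hxy hyz
  have hchain : ∀ c ⊆ Set.range S, IsChain (· ⊆ ·) c → c.Nonempty →
      ∃ lb ∈ Set.range S, ∀ s ∈ c, lb ⊆ s := by
    intro c hcS hc hcne
    have : Nonempty c := hcne.to_subtype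
    have hsections : ∀ s ∈ c, s.Nonempty ∧ IsClosed s := by
      intro s hs
      obtain ⟨x, rfl⟩ := hcS hs
      exact ⟨hserial x, hclosed x⟩
    obtain ⟨z, hz⟩ := IsCompact.nonempty_sInter_of_directed_nonempty_isCompact_isClosed
      (IsChain.directedOn (r := fun s t : Set X => s ⊇ t) hc.symm)
      (fun s hs => (hsections s hs).1)
      (fun s hs => (hsections s hs).2.isCompact) (fun s hs => (hsections s hs).2)
    refine ⟨S z, ⟨z, rfl⟩, fun s hs => ?_⟩
    obtain ⟨x, rfl⟩ := hcS hs
    exact hS_mono (Set.mem_sInter.mp hz _ hs)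
  obtain ⟨_, -, hmin⟩ := zorn_superset_nonempty (Set.range S) hchain
    (S (Classical.arbitrary X)) ⟨_, rfl⟩
  obtain ⟨x₀, rfl⟩ := hmin.prop
  obtain ⟨y, hy⟩ := hserial x₀
  have hSy : S y = S x₀ := hmin.eq_of_subset ⟨y, rfl⟩ (hS_mono hy)
  exact ⟨y, hSy.ge hy⟩

section StrongChain

variable {X : Type*} [MetricSpace X] {f : X → X}

lemma isStrongChain_one {ε : ℝ} (hε : 0 < ε) (x : X) :
    IsStrongChain f ε x (f x) 1 (update (fun _ => f x) 0 x) := by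
  refine ⟨le_rfl, by simp, by simp, ?_⟩
  simpa using hε

lemma IsStrongChain.append {ε₁ ε₂ : ℝ} {x y z : X} {n m : ℕ} {c c' : ℕ → X}
    (h₁ : IsStrongChain f ε₁ x y n c) (h₂ : IsStrongChain f ε₂ y z m c') :
    IsStrongChain f (ε₁ + ε₂) x z (n + m) (fun i => if i ≤ n then c i else c' (i - n)) := by
  obtain ⟨hn, hc₀, hcn, hsum₁⟩ := h₁
  obtain ⟨hm, hc'₀, hc'm, hsum₂⟩ := h₂
  set d : ℕ → X := fun i => if i ≤ n then c i else c' (i - n)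
  have hleft : ∀ i ≤ n, d i = c i := fun i hi => if_pos hi
  have hright : ∀ j, d (n + j) = c' j := by
    rintro (_ | j)
    · simp [hleft n le_rfl, hcn, hc'₀]
    · simp [d]
  refine ⟨by omega, hleft 0 (Nat.zero_le n) ▸ hc₀, hright m ▸ hc'm, ?_⟩
  calc ∑ i ∈ Finset.range (n + m), dist (f (d i)) (d (i + 1))
      = ∑ i ∈ Finset.range n, dist (f (c i)) (c (i + 1))
          + ∑ j ∈ Finset.range m, dist (f (c' j)) (c' (j + 1)) := by
        rw [Finset.sum_range_add]
        congr 1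
        · refine Finset.sum_congr rfl fun i hi => ?_
          have hi : i < n := Finset.mem_range.mp hi
          rw [hleft i hi.le, hleft (i + 1) hi]
        · refine Finset.sum_congr rfl fun j _ => ?_
          rw [hright j, add_assoc, hright (j + 1)]
    _ < ε₁ + ε₂ := add_lt_add hsum₁ hsum₂

lemma IsStrongChain.update_last {ε δ : ℝ} {x y y' : X} {n : ℕ} {c : ℕ → X}
    (h : IsStrongChain f ε x y n c) (hy : dist y y' < δ) :
    IsStrongChain f (ε + δ) x y' n (update c n y') := by
  obtain ⟨hn, hc₀, hcn, hsum⟩ := h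
  obtain ⟨k, rfl⟩ : ∃ k, n = k + 1 := ⟨n - 1, by omega⟩
  refine ⟨hn, by simpa using hc₀, by simp, ?_⟩
  have hkeep : ∀ i ≤ k, update c (k + 1) y' i = c i := fun i hi => update_of_ne (by omega) _ _
  rw [Finset.sum_range_succ] at hsum ⊢
  rw [hkeep k le_rfl, update_self, Finset.sum_congr rfl fun i hi => by
    rw [hkeep i (Finset.mem_range.mp hi).le, hkeep (i + 1) (Finset.mem_range.mp hi)]]
  have := dist_triangle (f (c k)) (c (k + 1)) y'
  rw [hcn] at this hsum
  linarith

variable (f) in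
def StrongChainRel (x y : X) : Prop :=
  ∀ ε : ℝ, 0 < ε → ∃ (n : ℕ) (c : ℕ → X), IsStrongChain f ε x y n c

lemma strongChainRel_apply_self (x : X) : StrongChainRel f x (f x) :=
  fun _ hε => ⟨1, _, isStrongChain_one hε x⟩

lemma StrongChainRel.trans {x y z : X} (h₁ : StrongChainRel f x y) (h₂ : StrongChainRel f y z) :
    StrongChainRel f x z := by
  intro ε hε
  obtain ⟨n, c, hc⟩ := h₁ (ε / 2) (half_pos hε)
  obtain ⟨m, c', hc'⟩ := h₂ (ε / 2) (half_pos hε)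
  exact ⟨n + m, _, add_halves ε ▸ hc.append hc'⟩

lemma isClosed_setOf_strongChainRel (x : X) : IsClosed {y | StrongChainRel f x y} := by
  refine isClosed_of_closure_subset fun y hy ε hε => ?_
  obtain ⟨y', hy', hyy'⟩ := Metric.mem_closure_iff.mp hy (ε / 2) (half_pos hε)
  obtain ⟨n, c, hc⟩ := hy' (ε / 2) (half_pos hε)
  exact ⟨n, _, add_halves ε ▸ hc.update_last (dist_comm y y' ▸ hyy')⟩

end StrongChain

theorem exists_strong_chain_recurrent_point
    {X : Type*} [MetricSpace X] [CompactSpace X] [Nonempty X] (f : X → X) :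
    ∃ x : X, ∀ ε : ℝ, 0 < ε → ∃ (n : ℕ) (c : ℕ → X), IsStrongChain f ε x x n c :=
  exists_rel_self_of_isClosed_setOf_rel StrongChainRel.trans
    (fun x => ⟨f x, strongChainRel_apply_self x⟩) isClosed_setOf_strongChainRel
end

section
/- Let X be a nonempty compact metric space with metric d and let f : X → X be an arbitrary function (no continuity is assumed). Then (X,f) has an SC_d-transitive subsystem: there exists a nonempty, topologically closed subset S ⊆ X with f(S) ⊆ S that is internally SC_d-transitive, i.e., for all x,y ∈ S and every ε > 0 there is a strong (ε,d)-chain from x to y all of whose points lie in S. -/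
open Set Function

section

variable {X : Type*}

theorem exists_minimal_nonempty_isClosed_mapsTo [TopologicalSpace X] [CompactSpace X]
    [Nonempty X] (f : X → X) :
    ∃ M : Set X, Minimal (fun S => S.Nonempty ∧ IsClosed S ∧ MapsTo f S S) M := by
  set 𝒮 : Set (Set X) := {S | S.Nonempty ∧ IsClosed S ∧ MapsTo f S S}
  have hbound : ∀ 𝒞 ⊆ 𝒮, IsChain (· ⊆ ·) 𝒞 → 𝒞.Nonempty → ∃ T ∈ 𝒮, ∀ S ∈ 𝒞, T ⊆ S := by
    intro 𝒞 h𝒞 hchain hne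
    have := hne.to_subtype
    refine ⟨⋂₀ 𝒞, ⟨?_, isClosed_sInter fun S hS => (h𝒞 hS).2.1, ?_⟩,
      fun S hS => sInter_subset_of_mem hS⟩
    · exact IsCompact.nonempty_sInter_of_directed_nonempty_isCompact_isClosed
        (IsChain.directedOn (r := fun s t : Set X => t ⊆ s) hchain.symm)
        (fun S hS => (h𝒞 hS).1) (fun S hS => (h𝒞 hS).2.1.isCompact) (fun S hS => (h𝒞 hS).2.1)
    · exact fun x hx => mem_sInter.2 fun S hS => (h𝒞 hS).2.2 (hx S hS)
  obtain ⟨M, -, hM⟩ := zorn_superset_nonempty 𝒮 hbound univ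
    ⟨univ_nonempty, isClosed_univ, mapsTo_univ f univ⟩
  exact ⟨M, hM⟩

namespace IsStrongChain

variable [MetricSpace X] {f : X → X} {ε : ℝ} {x y z : X} {n : ℕ} {c : ℕ → X}

theorem sum_dist_update_of_lt {m k : ℕ} (hmk : m < k) :
    ∑ i ∈ Finset.range m, dist (f (update c k z i)) (update c k z (i + 1)) =
      ∑ i ∈ Finset.range m, dist (f (c i)) (c (i + 1)) := by
  refine Finset.sum_congr rfl fun i hi => ?_
  have hi : i < m := Finset.mem_range.1 hi
  rw [update_of_ne (by omega), update_of_ne (by omega)]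

theorem mono (h : IsStrongChain f ε x y n c) {ε' : ℝ} (hε : ε ≤ ε') :
    IsStrongChain f ε' x y n c :=
  ⟨h.1, h.2.1, h.2.2.1, h.2.2.2.trans_le hε⟩

theorem of_dist_lt (h : dist (f x) y < ε) :
    IsStrongChain f ε x y 1 (update (fun _ => x) 1 y) :=
  ⟨le_rfl, rfl, update_self .., by simpa using h⟩

theorem snoc (h : IsStrongChain f ε x y n c) :
    IsStrongChain f (ε + dist (f y) z) x z (n + 1) (update c (n + 1) z) := by
  obtain ⟨-, hc0, hcn, hsum⟩ := h
  refine ⟨by omega, by rwa [update_of_ne (by omega)], update_self .., ?_⟩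
  rw [Finset.sum_range_succ, sum_dist_update_of_lt (by omega), update_of_ne (by omega),
    update_self, hcn]
  gcongr

theorem update_last_s4 (h : IsStrongChain f ε x y n c) :
    IsStrongChain f (ε + dist y z) x z n (update c n z) := by
  obtain ⟨hn, hc0, hcn, hsum⟩ := h
  obtain ⟨m, rfl⟩ : ∃ m, n = m + 1 := ⟨n - 1, by omega⟩
  refine ⟨hn, by rwa [update_of_ne (by omega)], update_self .., ?_⟩
  rw [Finset.sum_range_succ] at hsum ⊢
  rw [sum_dist_update_of_lt (by omega), update_of_ne (by omega), update_self]
  have hlast : dist (f (c m)) z ≤ dist (f (c m)) (c (m + 1)) + dist y z :=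
    hcn ▸ dist_triangle _ _ _
  linarith

end IsStrongChain

theorem update_mem_of_forall_lt_mem {S : Set X} {c : ℕ → X} {k : ℕ} {z : X}
    (hc : ∀ i < k, c i ∈ S) (hz : z ∈ S) : ∀ i ≤ k, update c k z i ∈ S := by
  intro i hi
  rcases hi.lt_or_eq with hi | rfl
  · rw [update_of_ne hi.ne]; exact hc i hi
  · rwa [update_self]

section Reachable

variable [MetricSpace X] {f : X → X} {S : Set X} {x : X}

def strongChainReachable (f : X → X) (S : Set X) (x : X) : Set X :=
  {y | ∀ δ > 0, ∃ (n : ℕ) (c : ℕ → X), IsStrongChain f δ x y n c ∧ ∀ i ≤ n, c i ∈ S}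

theorem strongChainReachable_subset : strongChainReachable f S x ⊆ S := fun y hy => by
  obtain ⟨n, c, ⟨-, -, hcn, -⟩, hcS⟩ := hy 1 one_pos
  exact hcn ▸ hcS n le_rfl

theorem apply_mem_strongChainReachable (hS : MapsTo f S S) (hx : x ∈ S) :
    f x ∈ strongChainReachable f S x := fun δ hδ =>
  ⟨1, _, .of_dist_lt (by rwa [dist_self]),
    update_mem_of_forall_lt_mem (fun _ _ => hx) (hS hx)⟩

theorem mapsTo_strongChainReachable (hS : MapsTo f S S) :
    MapsTo f (strongChainReachable f S x) (strongChainReachable f S x) := fun y hy δ hδ => by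
  obtain ⟨n, c, hc, hcS⟩ := hy δ hδ
  refine ⟨n + 1, _, hc.snoc.mono (by rw [dist_self, add_zero]),
    update_mem_of_forall_lt_mem (fun i hi => hcS i (by omega))
      (hS (strongChainReachable_subset hy))⟩

theorem isClosed_strongChainReachable (hS : IsClosed S) :
    IsClosed (strongChainReachable f S x) := by
  refine isClosed_of_closure_subset fun z hz δ hδ => ?_
  obtain ⟨y, hy, hzy⟩ := Metric.mem_closure_iff.1 hz (δ / 2) (by positivity)
  obtain ⟨n, c, hc, hcS⟩ := hy (δ / 2) (by positivity)
  have hzS : z ∈ S := hS.closure_subset (closure_mono strongChainReachable_subset hz)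
  refine ⟨n, _, hc.update_last_s4.mono ?_,
    update_mem_of_forall_lt_mem (fun i hi => hcS i hi.le) hzS⟩
  linarith [dist_comm y z]

end Reachable

end

theorem exists_strong_chain_transitive_subsystem
    {X : Type*} [MetricSpace X] [CompactSpace X] [Nonempty X] (f : X → X) :
    ∃ S : Set X, S.Nonempty ∧ IsClosed S ∧ Set.MapsTo f S S ∧
      ∀ x ∈ S, ∀ y ∈ S, ∀ ε : ℝ, 0 < ε →
        ∃ (n : ℕ) (c : ℕ → X), IsStrongChain f ε x y n c ∧ ∀ i ≤ n, c i ∈ S := by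
  obtain ⟨M, hM⟩ := exists_minimal_nonempty_isClosed_mapsTo f
  obtain ⟨hMne, hMcl, hMinv⟩ := hM.prop
  refine ⟨M, hMne, hMcl, hMinv, fun x hx y hy => ?_⟩
  have hreach : strongChainReachable f M x = M :=
    hM.eq_of_subset ⟨⟨f x, apply_mem_strongChainReachable hMinv hx⟩,
      isClosed_strongChainReachable hMcl, mapsTo_strongChainReachable hMinv⟩
      strongChainReachable_subset
  exact hreach.ge hy
end
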